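/- arXiv:2404.04288 — 3 statements merged into one kernel-verified Lean document; each statement's English description precedes it below -/
import Mathlib

section
/- Let m : ℝ → ℂ be Lebesgue measurable, let j ∈ ℕ, let b₀,…,b_j ∈ ℂ, N₀,…,N_j ∈ ℕ, and c₀,…,c_j ∈ ℝ with 0 ≤ c_k < log 2 for every k. Let z₀ ∈ ℂ be such that t ↦ e^{-z₀ t} m(t) is Lebesgue integrable on (0,∞), and suppose f : ℂ → ℂ satisfies f(w) = ∫₀^∞ e^{-w t} m(t) dt + ∑_{k=0}^{j} b_k e^{-c_k w} w^{N_k} for every w ∈ ℂ with Re(w) ≥ Re(z₀). Then for every z ∈ ℂ with Re(z) > Re(z₀), the Newton series ∑_{k=0}^{∞} C(z − z₀, k) · Δ^k[f](z₀) converges and its sum equals f(z). -/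
open MeasureTheory Filter Finset Topology

noncomputable section

/-- The generalized binomial coefficient `C(w, k) = w (w-1) ⋯ (w-k+1) / k!`. -/
def genBinom (w : ℂ) (k : ℕ) : ℂ :=
  (∏ i ∈ Finset.range k, (w - (i : ℂ))) / (k.factorial : ℂ)

/-- The k-th forward difference (step 1) of `f` at `z₀`. -/
def fwdDiff1 (f : ℂ → ℂ) (z₀ : ℂ) (k : ℕ) : ℂ :=
  ∑ i ∈ Finset.range (k + 1), (k.choose i : ℂ) * (-1) ^ (k - i) * f (z₀ + (i : ℂ))

/-!
The Newton series is linear in `f`, and it only sees `f` on `z₀ + ℕ` and at `z`, so the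
Laplace transform and each term `e^{-cw} w^N` can be treated separately.

For the kernel `w ↦ e^{-wt}` one has `Δ^k = e^{-z₀t} (e^{-t} - 1)^k`, so with `u = z - z₀` the
Newton series becomes the binomial series `∑ C(u, k) (e^{-t} - 1)^k = e^{-ut}` integrated
against `e^{-z₀t} m(t)`. For `Re u > 0` the coefficients are absolutely summable
(`|C(u, k+1)| / |C(u, k)| = |u - k| / (k + 1) ≤ 1 - (1 + Re u / 2) / (k + 1)`, Raabe's test), so
dominated convergence applies.

For `e^{-cw} w^N`, expand `w^N` in the Newton basis `C(w - z₀, q)`. The Newton series of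
`e^{-cw} C(w - z₀, q)` is `e^{-cz₀} C(u, q) e^{-cq}` times the binomial series
`∑ C(u - q, r) (e^{-c} - 1)^r`, which converges to `e^{-c(u-q)}` because `0 < e^{-c} ≤ 1`.
-/

open fwdDiff

lemma Ring.choose_eq_descPochhammer_eval_div {K : Type*} [Field K] [CharZero K] (a : K) (k : ℕ) :
    Ring.choose a k = (descPochhammer K k).eval a / k.factorial := by
  rw [Ring.choose_eq_smul, ← Polynomial.eval₂_smulOneHom_eq_smeval, ← Polynomial.eval_map,
    descPochhammer_map, smul_eq_mul, div_eq_inv_mul]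

lemma Ring.choose_succ_eq_mul_div {K : Type*} [Field K] [CharZero K] (a : K) (k : ℕ) :
    Ring.choose a (k + 1) = Ring.choose a k * (a - k) / (k + 1) := by
  rw [Ring.choose_eq_descPochhammer_eval_div, Ring.choose_eq_descPochhammer_eval_div,
    descPochhammer_succ_right, Polynomial.eval_mul, Nat.factorial_succ]
  simp only [Polynomial.eval_sub, Polynomial.eval_X, Polynomial.eval_natCast, Nat.cast_mul,
    Nat.cast_add, Nat.cast_one]
  field_simp

lemma genBinom_eq_choose (w : ℂ) (k : ℕ) : genBinom w k = Ring.choose w k := by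
  rw [Ring.choose_eq_descPochhammer_eval_div, descPochhammer_eval_eq_prod_range, genBinom]

lemma fwdDiff1_eq_fwdDiff_iter (f : ℂ → ℂ) (z₀ : ℂ) (k : ℕ) :
    fwdDiff1 f z₀ k = (Δ_[1])^[k] f z₀ := by
  rw [fwdDiff1, fwdDiff_iter_eq_sum_shift]
  refine sum_congr rfl fun i _ => ?_
  simp only [zsmul_eq_mul, nsmul_eq_mul]
  push_cast
  ring_nf

theorem Complex.hasSum_choose_mul_pow (a : ℂ) {x : ℂ} (hx : ‖x‖ < 1) :
    HasSum (fun k => Ring.choose a k * x ^ k) ((1 + x) ^ a) := by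
  have := Complex.one_add_cpow_hasFPowerSeriesOnBall_zero (a := a) |>.hasSum (y := x)
    (by simpa using ENNReal.ofReal_lt_one.mpr hx)
  simpa [binomialSeries, FormalMultilinearSeries.ofScalars_apply_eq, mul_comm] using this

lemma norm_exp_neg_sub_one_lt_one {t : ℝ} (ht : 0 ≤ t) : ‖Complex.exp (-t) - 1‖ < 1 := by
  rw [← Complex.ofReal_neg, ← Complex.ofReal_exp, ← Complex.ofReal_one, ← Complex.ofReal_sub,
    Complex.norm_real, Real.norm_eq_abs, abs_sub_lt_iff]
  constructor <;> linarith [Real.exp_pos (-t), Real.exp_le_one_iff.mpr (neg_nonpos.mpr ht)]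

theorem hasSum_choose_mul_exp_neg_sub_one_pow (a : ℂ) {t : ℝ} (ht : 0 ≤ t) :
    HasSum (fun k => Ring.choose a k * (Complex.exp (-t) - 1) ^ k) (Complex.exp (-a * t)) := by
  convert Complex.hasSum_choose_mul_pow a (norm_exp_neg_sub_one_lt_one ht) using 1
  rw [add_sub_cancel, Complex.cpow_def_of_ne_zero (Complex.exp_ne_zero _), Complex.log_exp]
  · ring_nf
  all_goals simp [Real.pi_pos.le, Real.pi_pos]

lemma one_sub_div_mul_rpow_neg_le {p : ℝ} (hp : 1 ≤ p) (k : ℕ) :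
    (1 - p / (k + 1)) * ((k : ℝ) + 1) ^ (-p) ≤ ((k : ℝ) + 2) ^ (-p) := by
  have hk1 : (0 : ℝ) < k + 1 := by positivity
  have hk2 : (0 : ℝ) < k + 2 := by positivity
  have bernoulli : 1 - p / (k + 1) ≤ ((k : ℝ) + 1) ^ p / ((k : ℝ) + 2) ^ p := by
    rw [← Real.div_rpow hk1.le hk2.le]
    calc 1 - p / (k + 1) ≤ 1 + p * (-1 / (k + 2)) := by
          rw [mul_div_assoc', mul_neg_one, neg_div, ← sub_eq_add_neg]
          gcongr
          linarith
      _ ≤ (1 + -1 / (k + 2)) ^ p := one_add_mul_self_le_rpow_one_add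
          (by rw [neg_div, neg_le_neg_iff, div_le_one hk2]; linarith) hp
      _ = ((k + 1) / (k + 2)) ^ p := by congr 1; field_simp; ring
  rw [Real.rpow_neg hk1.le, Real.rpow_neg hk2.le]
  calc (1 - p / (k + 1)) * (((k : ℝ) + 1) ^ p)⁻¹
      ≤ ((k : ℝ) + 1) ^ p / ((k : ℝ) + 2) ^ p * (((k : ℝ) + 1) ^ p)⁻¹ := by gcongr
    _ = (((k : ℝ) + 2) ^ p)⁻¹ := by field_simp

/-- **Raabe's test**. -/
theorem summable_of_eventually_le_one_sub_div_mul {a : ℕ → ℝ} {p : ℝ} (hp : 1 < p)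
    (ha : ∀ k, 0 ≤ a k) (h : ∀ᶠ k : ℕ in atTop, a (k + 1) ≤ (1 - p / (k + 1)) * a k) :
    Summable a := by
  set b : ℕ → ℝ := fun k => ((k : ℝ) + 1) ^ (-p)
  have hb : ∀ k, 0 < b k := fun k => by positivity
  obtain ⟨K, hK⟩ := eventually_atTop.mp h
  have hratio : ∀ k ≥ K, a k / b k ≤ a K / b K := by
    intro k hk
    induction k, hk using Nat.le_induction with
    | base => rfl
    | succ k hk ih =>
      refine le_trans ?_ ih
      rw [div_le_div_iff₀ (hb _) (hb _)]
      calc a (k + 1) * b k ≤ (1 - p / (k + 1)) * a k * b k := by gcongr; exact hK k hk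
        _ = a k * ((1 - p / (k + 1)) * b k) := by ring
        _ ≤ a k * b (k + 1) := by
          gcongr
          · exact ha k
          · simpa [b, add_assoc, one_add_one_eq_two] using
              one_sub_div_mul_rpow_neg_le hp.le k
  have hbsum : Summable b := by
    simpa [b] using
      (summable_nat_add_iff 1).mpr (Real.summable_nat_rpow.mpr (by linarith : -p < -1))
  refine Summable.of_norm_bounded_eventually_nat (hbsum.mul_left (a K / b K)) ?_
  filter_upwards [eventually_ge_atTop K] with k hk
  rw [Real.norm_of_nonneg (ha k), ← div_le_iff₀ (hb k)]
  exact hratio k hk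

lemma eventually_norm_sub_natCast_le {u : ℂ} (hu : 0 < u.re) :
    ∀ᶠ k : ℕ in atTop, ‖u - k‖ ≤ k - u.re / 2 := by
  filter_upwards [tendsto_natCast_atTop_atTop.eventually_ge_atTop ((u.im ^ 2 + u.re ^ 2) / u.re)]
    with k hk
  rw [div_le_iff₀ hu] at hk
  have hk' : u.re ≤ k := by nlinarith [sq_nonneg u.im]
  rw [← pow_le_pow_iff_left₀ (norm_nonneg _) (by linarith) two_ne_zero, Complex.sq_norm,
    Complex.normSq_apply]
  simp only [Complex.sub_re, Complex.natCast_re, Complex.sub_im, Complex.natCast_im, sub_zero]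
  nlinarith

theorem summable_norm_choose {u : ℂ} (hu : 0 < u.re) :
    Summable fun k => ‖Ring.choose u k‖ := by
  refine summable_of_eventually_le_one_sub_div_mul (p := 1 + u.re / 2) (by linarith)
    (fun k => norm_nonneg _) ?_
  filter_upwards [eventually_norm_sub_natCast_le hu] with k hk
  have hnorm : ‖(k : ℂ) + 1‖ = k + 1 := by exact_mod_cast Complex.norm_natCast (k + 1)
  rw [Ring.choose_succ_eq_mul_div, norm_div, norm_mul, hnorm, mul_div_assoc, mul_comm]
  gcongr
  rw [div_le_iff₀ (by positivity)]
  calc ‖u - k‖ ≤ k - u.re / 2 := hk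
    _ = (1 - (1 + u.re / 2) / (k + 1)) * (k + 1) := by field_simp; ring

def HasNewtonSum (f : ℂ → ℂ) (z₀ u : ℂ) : Prop :=
  HasSum (fun k => Ring.choose u k * (Δ_[1])^[k] f z₀) (f (z₀ + u))

namespace HasNewtonSum

variable {f g : ℂ → ℂ} {z₀ u : ℂ}

lemma add (hf : HasNewtonSum f z₀ u) (hg : HasNewtonSum g z₀ u) :
    HasNewtonSum (f + g) z₀ u := by
  simpa only [HasNewtonSum, fwdDiff_iter_add, Pi.add_apply, mul_add] using HasSum.add hf hg

lemma const_smul (c : ℂ) (hf : HasNewtonSum f z₀ u) : HasNewtonSum (c • f) z₀ u := by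
  simpa only [HasNewtonSum, fwdDiff_iter_const_smul, Pi.smul_apply, smul_eq_mul,
    mul_left_comm _ c] using HasSum.mul_left c hf

lemma sum {ι : Type*} (s : Finset ι) {F : ι → ℂ → ℂ} (hF : ∀ i ∈ s, HasNewtonSum (F i) z₀ u) :
    HasNewtonSum (∑ i ∈ s, F i) z₀ u := by
  simpa only [HasNewtonSum, fwdDiff_iter_finsetSum, Finset.sum_apply, mul_sum] using hasSum_sum hF

lemma congr (hg : HasNewtonSum g z₀ u) (hfg : ∀ w, z₀.re ≤ w.re → f w = g w) (hu : 0 ≤ u.re) :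
    HasNewtonSum f z₀ u := by
  have hΔ : ∀ k, (Δ_[1])^[k] f z₀ = (Δ_[1])^[k] g z₀ := fun k => by
    simp only [fwdDiff_iter_eq_sum_shift]
    exact sum_congr rfl fun i _ => by rw [hfg _ (by simp)]
  unfold HasNewtonSum at hg ⊢
  rw [hfg _ (by simpa using hu)]
  simpa only [hΔ] using hg

end HasNewtonSum

lemma fwdDiff_iter_cexp_mul (a : ℂ) (k : ℕ) :
    (Δ_[1])^[k] (fun w => Complex.exp (a * w))
      = fun w => (Complex.exp a - 1) ^ k * Complex.exp (a * w) := by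
  induction k with
  | zero => simp
  | succ k ih =>
    ext w
    rw [Function.iterate_succ_apply', ih]
    simp only [fwdDiff, mul_add, mul_one, Complex.exp_add, pow_succ]
    ring

lemma fwdDiff_iter_integral {α : Type*} [MeasurableSpace α] {μ : Measure α} {F : ℂ → α → ℂ}
    {z : ℂ} (hF : ∀ i : ℕ, Integrable (F (z + i)) μ) (k : ℕ) :
    (Δ_[1])^[k] (fun w => ∫ x, F w x ∂μ) z = ∫ x, (Δ_[1])^[k] (fun w => F w x) z ∂μ := by
  simp only [fwdDiff_iter_eq_sum_shift, nsmul_one, zsmul_eq_mul]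
  rw [integral_finsetSum _ fun i _ => (hF i).const_mul _]
  simp only [integral_const_mul]

lemma norm_cexp_neg_mul_ofReal (v : ℂ) (t : ℝ) :
    ‖Complex.exp (-v * t)‖ = Real.exp (-v.re * t) := by
  simp [Complex.norm_exp]

lemma MeasureTheory.IntegrableOn.cexp_neg_mul_of_re_le {g : ℝ → ℂ} {z₀ w : ℂ}
    (hg : IntegrableOn (fun t : ℝ => Complex.exp (-z₀ * t) * g t) (Set.Ioi 0))
    (hw : z₀.re ≤ w.re) :
    IntegrableOn (fun t : ℝ => Complex.exp (-w * t) * g t) (Set.Ioi 0) := by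
  have hbdd := hg.bdd_mul (c := 1) (f := fun t : ℝ => Complex.exp (-(w - z₀) * t))
    (by fun_prop) ?_
  · refine IntegrableOn.congr_fun hbdd (fun t _ => ?_) measurableSet_Ioi
    rw [← mul_assoc, ← Complex.exp_add]
    ring_nf
  · rw [ae_restrict_iff' measurableSet_Ioi]
    refine Eventually.of_forall fun t ht => ?_
    rw [norm_cexp_neg_mul_ofReal, Real.exp_le_one_iff, Complex.sub_re]
    nlinarith [ht.out]

lemma fwdDiff_iter_laplace {m : ℝ → ℂ} {z₀ : ℂ}
    (hint : IntegrableOn (fun t : ℝ => Complex.exp (-z₀ * t) * m t) (Set.Ioi 0)) (k : ℕ) :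
    (Δ_[1])^[k] (fun w => ∫ t in Set.Ioi (0 : ℝ), Complex.exp (-w * t) * m t) z₀
      = ∫ t in Set.Ioi (0 : ℝ), (Complex.exp (-t) - 1) ^ k * (Complex.exp (-z₀ * t) * m t) := by
  rw [fwdDiff_iter_integral (F := fun w (t : ℝ) => Complex.exp (-w * t) * m t)
    (fun i => hint.cexp_neg_mul_of_re_le (by simp)) k]
  refine integral_congr_ae (Eventually.of_forall fun t => ?_)
  have hF : (fun w => Complex.exp (-w * t) * m t) = m t • fun w => Complex.exp (-t * w) := by
    ext w; simp only [Pi.smul_apply, smul_eq_mul]; ring_nf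
  simp only [hF, fwdDiff_iter_const_smul, fwdDiff_iter_cexp_mul, Pi.smul_apply, smul_eq_mul]
  ring_nf

theorem hasNewtonSum_laplace {m : ℝ → ℂ} {z₀ u : ℂ}
    (hint : IntegrableOn (fun t : ℝ => Complex.exp (-z₀ * t) * m t) (Set.Ioi 0)) (hu : 0 < u.re) :
    HasNewtonSum (fun w => ∫ t in Set.Ioi (0 : ℝ), Complex.exp (-w * t) * m t) z₀ u := by
  have hlim : ∫ t in Set.Ioi (0 : ℝ), Complex.exp (-(z₀ + u) * t) * m t
      = ∫ t in Set.Ioi (0 : ℝ), Complex.exp (-u * t) * (Complex.exp (-z₀ * t) * m t) := by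
    refine integral_congr_ae (Eventually.of_forall fun t => ?_)
    simp only [← mul_assoc, ← Complex.exp_add]
    ring_nf
  unfold HasNewtonSum
  simp only [fwdDiff_iter_laplace hint, ← integral_const_mul, hlim]
  refine hasSum_integral_of_dominated_convergence
    (fun k t => ‖Ring.choose u k‖ * ‖Complex.exp (-z₀ * t) * m t‖)
    (fun k => ?_) (fun k => ?_) ?_ ?_ ?_
  · have := hint.aestronglyMeasurable
    fun_prop
  · rw [ae_restrict_iff' measurableSet_Ioi]
    refine Eventually.of_forall fun t ht => ?_
    rw [norm_mul, norm_mul, norm_pow]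
    gcongr
    exact mul_le_of_le_one_left (norm_nonneg _)
      (pow_le_one₀ (norm_nonneg _) (norm_exp_neg_sub_one_lt_one ht.le).le)
  · exact ae_of_all _ fun t => (summable_norm_choose hu).mul_right _
  · simpa only [tsum_mul_right] using hint.norm.const_mul _
  · rw [ae_restrict_iff' measurableSet_Ioi]
    refine Eventually.of_forall fun t ht => ?_
    simpa only [mul_assoc] using
      (hasSum_choose_mul_exp_neg_sub_one_pow u ht.le).mul_right (Complex.exp (-z₀ * t) * m t)

theorem Polynomial.eval_eq_sum_choose_mul_fwdDiff_iter {K : Type*} [Field K] [CharZero K]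
    {P : Polynomial K} {N : ℕ} (hN : P.natDegree ≤ N) (u : K) :
    P.eval u = ∑ q ∈ range (N + 1), Ring.choose u q * (Δ_[1])^[q] P.eval 0 := by
  set d : ℕ → K := fun q => (Δ_[1])^[q] P.eval 0
  have hd : ∀ q, N < q → d q = 0 := fun q hq => by
    simp [d, Polynomial.fwdDiff_iter_eq_zero_of_degree_lt (hN.trans_lt hq)]
  set Q : Polynomial K := ∑ q ∈ range (N + 1), Polynomial.C (d q / q.factorial) * descPochhammer K q
  have hQ : ∀ v, Q.eval v = ∑ q ∈ range (N + 1), Ring.choose v q * d q := fun v => by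
    simp only [Q, Polynomial.eval_finsetSum, Polynomial.eval_mul, Polynomial.eval_C,
      Ring.choose_eq_descPochhammer_eval_div]
    exact sum_congr rfl fun q _ => by ring
  suffices P = Q from (congrArg (Polynomial.eval u) this).trans (hQ u)
  refine Polynomial.eq_of_infinite_eval_eq _ _ <|
    Set.infinite_of_injective_forall_mem Nat.cast_injective fun n : ℕ => ?_
  have gregoryNewton := shift_eq_sum_fwdDiff_iter 1 P.eval n 0
  simp only [zero_add, nsmul_one] at gregoryNewton
  simp only [Set.mem_ofPred_eq, hQ, gregoryNewton, Ring.choose_natCast, nsmul_eq_mul]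
  have hext : ∀ L ≤ n + N, (∀ q, L < q → (n.choose q : K) * d q = 0) →
      ∑ q ∈ range (L + 1), (n.choose q : K) * d q
        = ∑ q ∈ range (n + N + 1), (n.choose q : K) * d q := fun L hL hvanish =>
    sum_subset (range_subset_range.2 (by omega)) fun q _ hq =>
      hvanish q (by simpa using hq)
  rw [hext n (by omega) fun q hq => by simp [Nat.choose_eq_zero_of_lt hq],
    hext N (by omega) fun q hq => by simp [hd q hq]]

theorem sum_neg_one_pow_mul_choose_mul_choose_mul_pow {R : Type*} [CommRing R] (x : R) (k q : ℕ) :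
    ∑ i ∈ range (k + 1), (-1) ^ (k - i) * (k.choose i * i.choose q : R) * x ^ i
      = k.choose q * x ^ q * (x - 1) ^ (k - q) := by
  rcases lt_or_ge k q with hkq | hqk
  · rw [Nat.choose_eq_zero_of_lt hkq, Nat.cast_zero, zero_mul, zero_mul]
    refine sum_eq_zero fun i hi => ?_
    rw [Nat.choose_eq_zero_of_lt (n := i) (by simp at hi; omega)]
    simp
  obtain ⟨n, rfl⟩ := Nat.exists_eq_add_of_le hqk
  rw [add_assoc, sum_range_add, sum_eq_zero fun i hi => by
      rw [Nat.choose_eq_zero_of_lt (mem_range.1 hi)]; simp,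
    zero_add, Nat.add_sub_cancel_left, sub_eq_add_neg, add_pow, mul_sum]
  refine sum_congr rfl fun r hr => ?_
  have hr : r ≤ n := Nat.lt_succ_iff.1 (mem_range.1 hr)
  have hchoose : (q + n).choose (q + r) * (q + r).choose q = (q + n).choose q * n.choose r := by
    rw [Nat.choose_mul (by omega), Nat.add_sub_cancel_left, Nat.add_sub_cancel_left]
  rw [show q + n - (q + r) = n - r by omega, ← Nat.cast_mul, hchoose]
  push_cast
  ring

lemma fwdDiff_iter_cexp_mul_choose_sub (a z₀ : ℂ) (q k : ℕ) :
    (Δ_[1])^[k] (fun w => Complex.exp (a * w) * Ring.choose (w - z₀) q) z₀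
      = Complex.exp (a * z₀) *
          (k.choose q * Complex.exp a ^ q * (Complex.exp a - 1) ^ (k - q)) := by
  rw [fwdDiff_iter_eq_sum_shift, ← sum_neg_one_pow_mul_choose_mul_choose_mul_pow, mul_sum]
  refine sum_congr rfl fun i _ => ?_
  rw [nsmul_one, add_sub_cancel_left, Ring.choose_natCast, mul_add, Complex.exp_add,
    ← Complex.exp_nat_mul, zsmul_eq_mul]
  push_cast
  ring_nf

theorem hasNewtonSum_cexp_mul_choose_sub {c : ℝ} (hc : 0 ≤ c) (z₀ u : ℂ) (q : ℕ) :
    HasNewtonSum (fun w => Complex.exp (-c * w) * Ring.choose (w - z₀) q) z₀ u := by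
  unfold HasNewtonSum
  simp only [fwdDiff_iter_cexp_mul_choose_sub, add_sub_cancel_left]
  set x := Complex.exp (-c)
  refine (hasSum_nat_add_iff' q).mp ?_
  have hhead : ∑ k ∈ range q,
      Ring.choose u k * (Complex.exp (-c * z₀) * (k.choose q * x ^ q * (x - 1) ^ (k - q))) = 0 :=
    sum_eq_zero fun k hk => by rw [Nat.choose_eq_zero_of_lt (mem_range.1 hk)]; simp
  rw [hhead, sub_zero]
  have hshift : ∀ r, Ring.choose u (r + q) * (Complex.exp (-c * z₀) *
      ((r + q).choose q * x ^ q * (x - 1) ^ (r + q - q)))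
      = Complex.exp (-c * z₀) * x ^ q * Ring.choose u q * (Ring.choose (u - q) r * (x - 1) ^ r) :=
    fun r => by
    have := Ring.choose_smul_choose u (Nat.le_add_left q r)
    rw [nsmul_eq_mul, Nat.add_sub_cancel] at this
    rw [Nat.add_sub_cancel]
    linear_combination (Complex.exp (-c * z₀) * x ^ q * (x - 1) ^ r) * this
  have hval : Complex.exp (-c * z₀) * x ^ q * Ring.choose u q * Complex.exp (-(u - q) * c)
      = Complex.exp (-c * (z₀ + u)) * Ring.choose u q := by
    rw [← Complex.exp_nat_mul, ← Complex.exp_add, mul_right_comm, ← Complex.exp_add]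
    ring_nf
  simpa only [hshift, hval] using
    (hasSum_choose_mul_exp_neg_sub_one_pow (u - q) hc).mul_left
      (Complex.exp (-c * z₀) * x ^ q * Ring.choose u q)

theorem hasNewtonSum_cexp_mul_pow {c : ℝ} (hc : 0 ≤ c) (N : ℕ) (z₀ u : ℂ) :
    HasNewtonSum (fun w => Complex.exp (-c * w) * w ^ N) z₀ u := by
  set P : Polynomial ℂ := (Polynomial.X + Polynomial.C z₀) ^ N
  have hP : ∀ w, w ^ N = ∑ q ∈ range (N + 1),
      Ring.choose (w - z₀) q * (Δ_[1])^[q] P.eval 0 := fun w => by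
    rw [← P.eval_eq_sum_choose_mul_fwdDiff_iter (by simp [P])]
    simp [P]
  have hsplit : (fun w => Complex.exp (-c * w) * w ^ N) = ∑ q ∈ range (N + 1),
      (Δ_[1])^[q] P.eval 0 • fun w => Complex.exp (-c * w) * Ring.choose (w - z₀) q := by
    ext w
    simp only [hP, Finset.sum_apply, Pi.smul_apply, smul_eq_mul, mul_sum]
    exact sum_congr rfl fun q _ => by ring
  rw [hsplit]
  exact HasNewtonSum.sum _ fun q _ => (hasNewtonSum_cexp_mul_choose_sub hc z₀ u q).const_smul _

theorem newton_series_converges_general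
    (m : ℝ → ℂ) (j : ℕ) (b : ℕ → ℂ) (N : ℕ → ℕ)
    (c : ℕ → ℝ) (hc : ∀ k ≤ j, 0 ≤ c k ∧ c k < Real.log 2) (z₀ : ℂ)
    (hint : IntegrableOn (fun t : ℝ => Complex.exp (-z₀ * t) * m t) (Set.Ioi 0))
    (f : ℂ → ℂ)
    (hf : ∀ w : ℂ, z₀.re ≤ w.re →
      f w = (∫ t in Set.Ioi (0 : ℝ), Complex.exp (-w * t) * m t)
        + ∑ k ∈ Finset.range (j + 1), b k * Complex.exp (-(c k : ℂ) * w) * w ^ (N k))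
    (z : ℂ) (hz : z₀.re < z.re) :
    Tendsto (fun n : ℕ =>
        ∑ k ∈ Finset.range n, genBinom (z - z₀) k * fwdDiff1 f z₀ k)
      atTop (nhds (f z)) := by
  have hu : 0 < (z - z₀).re := by simpa using hz
  have hsum : HasNewtonSum ((fun w => ∫ t in Set.Ioi (0 : ℝ), Complex.exp (-w * t) * m t)
      + ∑ k ∈ range (j + 1), b k • fun w => Complex.exp (-(c k : ℂ) * w) * w ^ (N k)) z₀ (z - z₀) :=
    (hasNewtonSum_laplace hint hu).add <| HasNewtonSum.sum _ fun k hk =>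
      (hasNewtonSum_cexp_mul_pow (hc k (Nat.lt_succ_iff.1 (mem_range.1 hk))).1 _ _ _).const_smul _
  have hf' := hsum.congr (f := f) (fun w hw => by simp [hf w hw, mul_assoc]) hu.le
  unfold HasNewtonSum at hf'
  rw [add_sub_cancel] at hf'
  simp only [genBinom_eq_choose, fwdDiff1_eq_fwdDiff_iter]
  exact hf'.tendsto_sum_nat

theorem newton_series_converges
    (m : ℝ → ℂ) (hm : Measurable m) (j : ℕ) (b : ℕ → ℂ) (N : ℕ → ℕ)
    (c : ℕ → ℝ) (hc : ∀ k ≤ j, 0 ≤ c k ∧ c k < Real.log 2) (z₀ : ℂ)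
    (hint : IntegrableOn (fun t : ℝ => Complex.exp (-z₀ * t) * m t) (Set.Ioi 0))
    (f : ℂ → ℂ)
    (hf : ∀ w : ℂ, z₀.re ≤ w.re →
      f w = (∫ t in Set.Ioi (0 : ℝ), Complex.exp (-w * t) * m t)
        + ∑ k ∈ Finset.range (j + 1), b k * Complex.exp (-(c k : ℂ) * w) * w ^ (N k))
    (z : ℂ) (hz : z₀.re < z.re) :
    Tendsto (fun n : ℕ =>
        ∑ k ∈ Finset.range n, genBinom (z - z₀) k * fwdDiff1 f z₀ k)
      atTop (nhds (f z)) :=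
  newton_series_converges_general m j b N c hc z₀ hint f hf z hz
end
end

section
/- Let h > 0 be real. Let m : ℝ → ℂ be Lebesgue measurable and Lebesgue integrable, let j ∈ ℕ, let a₀,…,a_j ∈ ℂ, N₀,…,N_j ∈ ℕ, and c₀,…,c_j ∈ ℝ with c_k ∉ {1/(2h) + ν/h : ν ∈ ℤ} for every k. Suppose f : ℝ → ℂ satisfies f(w) = ∫_ℝ m(x) e^{-2πi w x} dx + ∑_{k=0}^{j} a_k e^{-2πi c_k w} (2πi w)^{N_k} for every w ∈ ℝ. Then for every y ∈ ℝ, lim_{n→∞} ∇_h^n[f](y) / 2^n = 0, i.e. ∇_h^n[f](y) = o(2^n). -/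
/-!
Write `e t = exp (2πit)`. The `n`-th backward difference of `w ↦ e (-xw)` at `y` is
`e (-xy) (1 - e (xh))ⁿ`, so for the Fourier-integral part of `f` the quotient `∇ₕⁿ/2ⁿ` is
`∫ m(x) e(-xy) ((1 - e(xh))/2)ⁿ dx`, which tends to `0` by dominated convergence:
`|1 - e(xh)| < 2` except on the countable set where `xh ∈ 1/2 + ℤ`.

For a term `a e(-cw) (2πiw)ᴺ`, put `z = e(ch)`; then `∇ₕⁿ` at `y` is `a e(-cy)` times
`∑ₖ (n choose k) (-z)ᵏ P(k)` for a polynomial `P` of degree `N`. The Gregory–Newton formula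
expands `P(k)` in the basis `k choose q`, against which the alternating sum is explicit:
`(n choose q) (-z)^q (1 - z)^(n-q)`. Since `ch ∉ 1/2 + ℤ`, `|1 - z| < 2`, so each term is
`o(2ⁿ)`.
-/

open MeasureTheory Filter Finset Topology

noncomputable section

open Asymptotics Complex Polynomial Real

theorem sum_range_choose_mul_choose_mul_pow {R : Type*} [CommSemiring R] (x : R) (n q : ℕ) :
    ∑ k ∈ range (n + 1), (n.choose k * k.choose q : R) * x ^ k =
      n.choose q * x ^ q * (1 + x) ^ (n - q) := by
  rcases lt_or_ge n q with hnq | hqn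
  · rw [Nat.choose_eq_zero_of_lt hnq, Nat.cast_zero, zero_mul, zero_mul]
    refine sum_eq_zero fun k hk => ?_
    rw [Nat.choose_eq_zero_of_lt (by grind : k < q), Nat.cast_zero, mul_zero, zero_mul]
  rw [← sum_range_add_sum_Ico _ (by omega : q ≤ n + 1), sum_Ico_eq_sum_range,
    sum_eq_zero fun k (hk : k ∈ range q) => by
      rw [Nat.choose_eq_zero_of_lt (mem_range.mp hk), Nat.cast_zero, mul_zero, zero_mul],
    zero_add, add_comm 1 x, add_pow, mul_sum, show n + 1 - q = n - q + 1 by omega]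
  refine sum_congr rfl fun i _ => ?_
  rw [← Nat.cast_mul, Nat.choose_mul (by omega), Nat.add_sub_cancel_left]
  push_cast
  ring

theorem sum_range_choose_mul_neg_pow {R : Type*} [CommRing R] (z : R) (n : ℕ) :
    ∑ k ∈ range (n + 1), (n.choose k : R) * (-z) ^ k = (1 - z) ^ n := by
  simpa [← sub_eq_add_neg] using sum_range_choose_mul_choose_mul_pow (-z) n 0

theorem Polynomial.eval_natCast_eq_sum_choose_mul_fwdDiff_iter {R : Type*} [CommRing R]
    (P : R[X]) {D : ℕ} (hD : P.natDegree < D) (k : ℕ) :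
    P.eval (k : R) = ∑ q ∈ range D, (k.choose q : R) * (fwdDiff 1)^[q] P.eval 0 := by
  have newton := shift_eq_sum_fwdDiff_iter 1 P.eval k 0
  simp only [zero_add, nsmul_eq_mul, mul_one] at newton
  rw [newton, sum_subset (range_subset_range.mpr (Nat.le_add_right (k + 1) D)),
    ← sum_subset (range_subset_range.mpr (Nat.le_add_left D (k + 1)))]
  · intro q _ hq
    rw [P.fwdDiff_iter_eq_zero_of_degree_lt (by simp at hq; omega), Pi.zero_apply, mul_zero]
  · intro q _ hq
    rw [Nat.choose_eq_zero_of_lt (by simp at hq; omega), Nat.cast_zero, zero_mul]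

theorem isLittleO_choose_mul_pow_sub {𝕜 : Type*} [NormedField 𝕜] {w : 𝕜} {r : ℝ}
    (hw : ‖w‖ < r) (hr : 1 < r) (q : ℕ) :
    (fun n : ℕ => (n.choose q : 𝕜) * w ^ (n - q)) =o[atTop] (fun n => r ^ n) := by
  set s := max ‖w‖ 1
  have hs : ‖s‖ < r := by
    rw [Real.norm_of_nonneg (by positivity)]
    exact max_lt hw hr
  refine IsBigO.trans_isLittleO ?_ (isLittleO_pow_const_mul_const_pow_const_pow_of_norm_lt q hs)
  refine .of_bound 1 (Eventually.of_forall fun n => ?_)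
  rw [one_mul, norm_mul, norm_mul, norm_pow, norm_pow, norm_pow, Real.norm_natCast]
  have hchoose : ‖(n.choose q : 𝕜)‖ ≤ (n : ℝ) ^ q := by
    calc ‖(n.choose q : 𝕜)‖ ≤ n.choose q := by simpa using Nat.norm_cast_le (α := 𝕜) _
      _ ≤ (n : ℝ) ^ q := by exact_mod_cast Nat.choose_le_pow n q
  have hpow : ‖w‖ ^ (n - q) ≤ ‖s‖ ^ n := by
    rw [Real.norm_of_nonneg (by positivity)]
    exact (pow_le_pow_left₀ (norm_nonneg w) (le_max_left _ _) _).trans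
      (pow_le_pow_right₀ (le_max_right _ _) (Nat.sub_le n q))
  exact mul_le_mul hchoose hpow (by positivity) (by positivity)

theorem isLittleO_sum_choose_mul_neg_pow_mul_eval {𝕜 : Type*} [NormedField 𝕜] {z : 𝕜}
    {r : ℝ} (hz : ‖1 - z‖ < r) (hr : 1 < r) (P : 𝕜[X]) :
    (fun n : ℕ => ∑ k ∈ range (n + 1), (n.choose k : 𝕜) * (-z) ^ k * P.eval (k : 𝕜))
      =o[atTop] (fun n => r ^ n) := by
  have newton_expansion (n : ℕ) :
      ∑ k ∈ range (n + 1), (n.choose k : 𝕜) * (-z) ^ k * P.eval (k : 𝕜) =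
        ∑ q ∈ range (P.natDegree + 1),
          (fwdDiff 1)^[q] P.eval 0 * (n.choose q * (-z) ^ q * (1 + -z) ^ (n - q)) := by
    simp_rw [P.eval_natCast_eq_sum_choose_mul_fwdDiff_iter (lt_add_one _),
      ← sum_range_choose_mul_choose_mul_pow, mul_sum]
    rw [sum_comm]
    exact sum_congr rfl fun q _ => sum_congr rfl fun k _ => by ring
  simp_rw [newton_expansion, ← sub_eq_add_neg]
  exact IsLittleO.fun_sum fun q _ =>
    ((isLittleO_choose_mul_pow_sub hz hr q).const_mul_left
      ((fwdDiff 1)^[q] P.eval 0 * (-z) ^ q)).congr_left fun n => by ring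

theorem norm_one_sub_lt_two {u : ℂ} (hu : ‖u‖ = 1) (hne : u ≠ -1) : ‖1 - u‖ < 2 := by
  have not_sameRay : ¬SameRay ℝ 1 (-u) := fun hray =>
    hne (neg_eq_iff_eq_neg.mp ((sameRay_iff_of_norm_eq (by simp [hu])).mp hray).symm)
  calc ‖1 - u‖ = ‖1 + -u‖ := by rw [sub_eq_add_neg]
    _ < ‖(1 : ℂ)‖ + ‖-u‖ := norm_add_lt_of_not_sameRay not_sameRay
    _ = 2 := by rw [norm_one, norm_neg, hu]; norm_num

theorem exists_int_eq_half_add_div_of_cexp_eq_neg_one {t h : ℝ}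
    (H : cexp (2 * π * I * (t * h)) = -1) : ∃ ν : ℤ, t = (1 / 2 + ν) / h := by
  have : cexp (2 * π * I * (t * h - 1 / 2 : ℝ)) = 1 := by
    rw [show 2 * π * I * ((t * h - 1 / 2 : ℝ) : ℂ) = 2 * π * I * (t * h : ℝ) - π * I by
      push_cast; ring, Complex.exp_sub, exp_pi_mul_I]
    push_cast
    rw [H, div_self (by norm_num)]
  obtain ⟨ν, hν⟩ := Complex.exp_eq_one_iff.mp this
  have hν' : t * h = 1 / 2 + ν := by
    have : ((t * h - 1 / 2 : ℝ) : ℂ) = ν :=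
      mul_left_cancel₀ two_pi_I_ne_zero (by rw [hν]; ring)
    norm_cast at this
    linarith
  have hh : h ≠ 0 := by
    rintro rfl
    have : (2 * ν + 1 : ℤ) = 0 := by exact_mod_cast (by linarith : (2 * ν + 1 : ℝ) = 0)
    omega
  exact ⟨ν, eq_div_of_mul_eq hh hν'⟩

theorem cexp_neg_two_pi_I_mul_sub_nat_mul (c y h : ℝ) (k : ℕ) :
    cexp (-2 * π * I * c * (y - k * h : ℝ)) =
      cexp (-2 * π * I * c * y) * cexp (2 * π * I * (c * h)) ^ k := by
  rw [← Complex.exp_nat_mul, ← Complex.exp_add]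
  push_cast
  ring_nf

theorem tendsto_integral_mul_pow_of_norm_lt_one {α : Type*} [MeasurableSpace α] {μ : Measure α}
    {g q : α → ℂ} (hg : Integrable g μ) (hq : AEStronglyMeasurable q μ)
    (hq_lt : ∀ᵐ x ∂μ, ‖q x‖ < 1) :
    Tendsto (fun n : ℕ => ∫ x, g x * q x ^ n ∂μ) atTop (𝓝 0) := by
  simpa only [integral_zero] using tendsto_integral_of_dominated_convergence
    (F := fun n x => g x * q x ^ n) (f := fun _ => 0)
    (fun x => ‖g x‖)
    (fun n => hg.aestronglyMeasurable.mul (hq.pow n)) hg.norm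
    (fun n => hq_lt.mono fun x hx => by
      rw [norm_mul, norm_pow]
      exact mul_le_of_le_one_right (norm_nonneg _) (pow_le_one₀ (norm_nonneg _) hx.le))
    (hq_lt.mono fun x hx => by
      simpa using (tendsto_pow_atTop_nhds_zero_of_norm_lt_one hx).const_mul (g x))

def backwardDiff (h : ℝ) (n : ℕ) (f : ℝ → ℂ) (y : ℝ) : ℂ :=
  ∑ k ∈ range (n + 1), (n.choose k : ℂ) * (-1) ^ k * f (y - k * h)

section backwardDiff

variable (h : ℝ) (n : ℕ) (y : ℝ)

theorem backwardDiff_add (f g : ℝ → ℂ) :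
    backwardDiff h n (f + g) y = backwardDiff h n f y + backwardDiff h n g y := by
  simp only [backwardDiff, Pi.add_apply, mul_add, sum_add_distrib]

theorem backwardDiff_finset_sum {ι : Type*} (s : Finset ι) (f : ι → ℝ → ℂ) :
    backwardDiff h n (∑ i ∈ s, f i) y = ∑ i ∈ s, backwardDiff h n (f i) y := by
  simp only [backwardDiff, Finset.sum_apply, mul_sum]
  exact sum_comm

theorem backwardDiff_fourierIntegral {m : ℝ → ℂ} (hm : Integrable m) :
    backwardDiff h n (fun w : ℝ => ∫ x, m x * cexp (-2 * π * I * w * x)) y =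
      ∫ x, m x * cexp (-2 * π * I * x * y) * (1 - cexp (2 * π * I * (x * h))) ^ n := by
  have hint (w : ℝ) : Integrable fun x : ℝ => m x * cexp (-2 * π * I * w * x) :=
    hm.mul_bdd (by fun_prop) (c := 1) (ae_of_all _ fun x => by rw [Complex.norm_exp]; simp)
  unfold backwardDiff
  simp_rw [← integral_const_mul]
  rw [← integral_finsetSum _ fun k _ => (hint _).const_mul _]
  refine integral_congr_ae (ae_of_all _ fun x => ?_)
  dsimp only
  rw [← sum_range_choose_mul_neg_pow, mul_sum]
  refine sum_congr rfl fun k _ => ?_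
  rw [mul_right_comm _ _ (x : ℂ), cexp_neg_two_pi_I_mul_sub_nat_mul]
  ring

theorem isLittleO_backwardDiff_fourierIntegral {m : ℝ → ℂ} (hm : Integrable m) :
    (fun n => backwardDiff h n (fun w : ℝ => ∫ x, m x * cexp (-2 * π * I * w * x)) y)
      =o[atTop] (fun n => (2 : ℝ) ^ n) := by
  have hae : ∀ᵐ x : ℝ, cexp (2 * π * I * (x * h)) ≠ -1 := by
    refine ae_iff.mpr (measure_mono_null (fun x hx => ?_)
      ((Set.countable_range fun ν : ℤ => (1 / 2 + ν) / h).measure_zero volume))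
    obtain ⟨ν, hν⟩ := exists_int_eq_half_add_div_of_cexp_eq_neg_one (not_not.mp hx)
    exact ⟨ν, hν.symm⟩
  have hlim := tendsto_integral_mul_pow_of_norm_lt_one (μ := volume)
    (g := fun x => m x * cexp (-2 * π * I * x * y))
    (q := fun x => (1 - cexp (2 * π * I * (x * h))) / 2)
    (hm.mul_bdd (by fun_prop) (c := 1) (ae_of_all _ fun x => by rw [Complex.norm_exp]; simp))
    (by fun_prop)
    (hae.mono fun x hx => by
      rw [norm_div, Complex.norm_ofNat, div_lt_one two_pos]
      exact norm_one_sub_lt_two (by rw [Complex.norm_exp]; simp) hx)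
  have two_pow : (fun n : ℕ => (2 : ℂ) ^ n) =O[atTop] (fun n => (2 : ℝ) ^ n) :=
    isBigO_of_le _ fun n => by simp
  refine (two_pow.mul_isLittleO ((isLittleO_one_iff ℝ).mpr hlim)).congr (fun n => ?_)
    fun n => mul_one _
  rw [backwardDiff_fourierIntegral h n y hm, ← integral_const_mul]
  congr 1 with x
  rw [div_pow]
  field_simp

theorem isLittleO_backwardDiff_cexp_mul_pow {c : ℝ} (hc : cexp (2 * π * I * (c * h)) ≠ -1)
    (a : ℂ) (N : ℕ) :
    (fun n => backwardDiff h n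
        (fun w : ℝ => a * cexp (-2 * π * I * c * w) * (2 * π * I * w) ^ N) y)
      =o[atTop] (fun n => (2 : ℝ) ^ n) := by
  have hz : ‖1 - cexp (2 * π * I * (c * h))‖ < 2 :=
    norm_one_sub_lt_two (by rw [Complex.norm_exp]; simp) hc
  set P : ℂ[X] := (C (2 * π * I * y) - C (2 * π * I * h) * X) ^ N
  have expand (n : ℕ) : backwardDiff h n
      (fun w : ℝ => a * cexp (-2 * π * I * c * w) * (2 * π * I * w) ^ N) y =
        a * cexp (-2 * π * I * c * y) * ∑ k ∈ range (n + 1),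
          (n.choose k : ℂ) * (-cexp (2 * π * I * (c * h))) ^ k * P.eval (k : ℂ) := by
    unfold backwardDiff
    rw [mul_sum]
    refine sum_congr rfl fun k _ => ?_
    simp only [cexp_neg_two_pi_I_mul_sub_nat_mul, P, eval_pow, eval_sub, eval_mul, eval_C, eval_X]
    push_cast
    ring
  simp_rw [expand]
  exact (isLittleO_sum_choose_mul_neg_pow_mul_eval hz one_lt_two P).const_mul_left _

end backwardDiff

theorem backward_differences_little_o_two_pow_general
    (h : ℝ)
    (m : ℝ → ℂ) (hmi : Integrable m)
    (j : ℕ) (a : ℕ → ℂ) (N : ℕ → ℕ) (c : ℕ → ℝ)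
    (hc : ∀ k ≤ j, ¬ ∃ ν : ℤ, c k = 1 / (2 * h) + (ν : ℝ) / h)
    (f : ℝ → ℂ)
    (hf : ∀ w : ℝ,
      f w = (∫ x : ℝ, m x * Complex.exp (-2 * (Real.pi : ℂ) * Complex.I * (w : ℂ) * (x : ℂ)))
        + ∑ k ∈ Finset.range (j + 1),
            a k * Complex.exp (-2 * (Real.pi : ℂ) * Complex.I * (c k : ℂ) * (w : ℂ))
              * (2 * (Real.pi : ℂ) * Complex.I * (w : ℂ)) ^ (N k))
    (y : ℝ) :
    Tendsto (fun n : ℕ =>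
        (∑ k ∈ Finset.range (n + 1),
          (n.choose k : ℂ) * (-1) ^ k * f (y - (k : ℝ) * h)) / 2 ^ n)
      atTop (nhds 0) := by
  have hf_eq : f = (fun w : ℝ => ∫ x, m x * cexp (-2 * π * I * w * x)) +
      ∑ i ∈ range (j + 1),
        fun w : ℝ => a i * cexp (-2 * π * I * c i * w) * (2 * π * I * w) ^ N i :=
    funext fun w => by simp only [hf, Pi.add_apply, Finset.sum_apply]
  have hc_exp (i : ℕ) (hi : i ∈ range (j + 1)) : cexp (2 * π * I * (c i * h)) ≠ -1 := by
    intro H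
    obtain ⟨ν, hν⟩ := exists_int_eq_half_add_div_of_cexp_eq_neg_one H
    exact hc i (Nat.lt_succ_iff.mp (mem_range.mp hi)) ⟨ν, by rw [hν]; ring⟩
  have little_o : (fun n => backwardDiff h n f y) =o[atTop] (fun n => (2 : ℝ) ^ n) := by
    simp_rw [hf_eq, backwardDiff_add, backwardDiff_finset_sum]
    exact (isLittleO_backwardDiff_fourierIntegral h y hmi).add
      (IsLittleO.fun_sum fun i hi => isLittleO_backwardDiff_cexp_mul_pow h y (hc_exp i hi) _ _)
  have little_o' : (fun n => backwardDiff h n f y) =o[atTop] (fun n => (2 : ℂ) ^ n) :=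
    isLittleO_norm_right.mp (by simpa only [norm_pow, Complex.norm_ofNat] using little_o)
  exact little_o'.tendsto_div_nhds_zero

theorem backward_differences_little_o_two_pow
    (h : ℝ) (hh : 0 < h)
    (m : ℝ → ℂ) (hm : Measurable m) (hmi : Integrable m)
    (j : ℕ) (a : ℕ → ℂ) (N : ℕ → ℕ) (c : ℕ → ℝ)
    (hc : ∀ k ≤ j, ¬ ∃ ν : ℤ, c k = 1 / (2 * h) + (ν : ℝ) / h)
    (f : ℝ → ℂ)
    (hf : ∀ w : ℝ,
      f w = (∫ x : ℝ, m x * Complex.exp (-2 * (Real.pi : ℂ) * Complex.I * (w : ℂ) * (x : ℂ)))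
        + ∑ k ∈ Finset.range (j + 1),
            a k * Complex.exp (-2 * (Real.pi : ℂ) * Complex.I * (c k : ℂ) * (w : ℂ))
              * (2 * (Real.pi : ℂ) * Complex.I * (w : ℂ)) ^ (N k))
    (y : ℝ) :
    Tendsto (fun n : ℕ =>
        (∑ k ∈ Finset.range (n + 1),
          (n.choose k : ℂ) * (-1) ^ k * f (y - (k : ℝ) * h)) / 2 ^ n)
      atTop (nhds 0) :=
  backward_differences_little_o_two_pow_general h m hmi j a N c hc f hf y
end
end

section
/- Let h > 0 be real. Let m : ℝ → ℂ be Lebesgue measurable and Lebesgue integrable, let j ∈ ℕ, let a₀,…,a_j ∈ ℂ, N₀,…,N_j ∈ ℕ, and c₀,…,c_j ∈ ℝ with c_k ∉ {ν/h : ν ∈ ℤ} for every k. Suppose f : ℝ → ℂ satisfies f(w) = ∫_ℝ m(x) e^{-2πi w x} dx + ∑_{k=0}^{j} a_k e^{-2πi c_k w} (2πi w)^{N_k} for every w ∈ ℝ. Then for every y ∈ ℝ, lim_{n→∞} (1/2^n) ∑_{k=0}^{n} (n choose k) f(y + (n/2 − k)·h) = 0, i.e. ∑_{k=0}^{n} (n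 choose k) f(y + (n/2 − k)·h) = o(2^n). -/
/-!
Averaging `g` over the points `y + (n/2 - k) h` with the binomial weights `C(n,k) / 2^n` is
linear in `g` and sends `w ↦ exp (w ζ)` to `exp (y ζ) cosh (h ζ / 2)^n`.

For the Fourier transform of `m` this turns the average into `∫ m(x) e^{-2πiyx} cos(πhx)^n dx`,
which tends to `0` by dominated convergence, since `|cos(πhx)| < 1` off the null set `h⁻¹ℤ`.

For a term `e^{-2πicw} (2πiw)^N`, the points are affine in `k`, so expanding `(2πiw)^N`
reduces the average to the binomial moments `∑ C(n,i) i^q z^i` with `z = e^{2πich}`. Since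
`i C(n,i) = n C(n-1,i-1)`, these are at most polynomial in `n` times `max 1 |1 + z|^n`, and
`|1 + z| < 2` precisely because `ch ∉ ℤ`; the polynomial factors from `(2πiw)^N` cannot beat the
geometric gain.
-/

open MeasureTheory Filter Finset Topology

noncomputable section

open Complex
open scoped Real

section BinomialMoment

variable {R : Type*} [CommSemiring R]

def binomialMoment (z : R) (q n : ℕ) : R :=
  ∑ i ∈ range (n + 1), (n.choose i : R) * (i : R) ^ q * z ^ i

lemma binomialMoment_zero (z : R) (n : ℕ) :
    binomialMoment z 0 n = (1 + z) ^ n := by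
  simp [binomialMoment, add_comm 1 z, add_pow, mul_comm]

lemma binomialMoment_succ_zero (z : R) (q : ℕ) :
    binomialMoment z (q + 1) 0 = 0 := by
  simp [binomialMoment]

lemma binomialMoment_succ_succ (z : R) (q n : ℕ) :
    binomialMoment z (q + 1) (n + 1) =
      (n + 1) * z * ∑ s ∈ range (q + 1), (q.choose s : R) * binomialMoment z s n := by
  have hchoose (i : ℕ) : ((n + 1).choose (i + 1) : R) * (i + 1) = (n + 1) * n.choose i := by
    simpa using congrArg (Nat.cast : ℕ → R) (Nat.add_one_mul_choose_eq n i).symm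
  have hpow (i : ℕ) : ((i : R) + 1) ^ q = ∑ s ∈ range (q + 1), (q.choose s : R) * (i : R) ^ s := by
    rw [add_pow]
    simp [mul_comm]
  simp only [binomialMoment, mul_sum]
  rw [sum_range_succ', sum_comm]
  simp only [Nat.cast_zero, zero_pow q.succ_ne_zero, mul_zero, zero_mul, add_zero]
  refine sum_congr rfl fun i _ => ?_
  calc ((n + 1).choose (i + 1) : R) * ((i + 1 : ℕ) : R) ^ (q + 1) * z ^ (i + 1)
      = ((n + 1).choose (i + 1) : R) * (i + 1) * ((i : R) + 1) ^ q * z * z ^ i := by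
        push_cast; ring
    _ = (n + 1) * z * ((n.choose i : R) * z ^ i *
          ∑ s ∈ range (q + 1), (q.choose s : R) * (i : R) ^ s) := by
        rw [hchoose, hpow]; ring
    _ = _ := by
        rw [mul_sum, mul_sum]
        exact sum_congr rfl fun s _ => by ring

lemma sum_choose_mul_pow_mul_linear_pow (z a b : R) (N n : ℕ) :
    ∑ i ∈ range (n + 1), (n.choose i : R) * z ^ i * (a * i + b) ^ N =
      ∑ p ∈ range (N + 1), (N.choose p : R) * a ^ p * b ^ (N - p) * binomialMoment z p n := by
  simp only [binomialMoment, add_pow, mul_sum]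
  rw [sum_comm]
  exact sum_congr rfl fun p _ => sum_congr rfl fun i _ => by ring

end BinomialMoment

section BinomialMomentBounds

variable {R : Type*} [NormedCommRing R] [NormOneClass R]

lemma norm_binomialMoment_succ_succ_le {z : R} (hz : ‖z‖ ≤ 1) {q n : ℕ} {B : ℝ}
    (hB : ∀ s ≤ q, ‖binomialMoment z s n‖ ≤ B) :
    ‖binomialMoment z (q + 1) (n + 1)‖ ≤ (n + 1) * 2 ^ q * B := by
  have hterm (s : ℕ) (hs : s ∈ range (q + 1)) :
      ‖(q.choose s : R) * binomialMoment z s n‖ ≤ q.choose s * B :=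
    (norm_mul_le _ _).trans (mul_le_mul (by simpa using Nat.norm_cast_le (α := R) _)
      (hB s (Nat.lt_succ_iff.mp (mem_range.mp hs))) (norm_nonneg _) (Nat.cast_nonneg _))
  have hfactor : ‖((n : R) + 1) * z‖ ≤ (n + 1) * 1 :=
    (norm_mul_le _ _).trans (mul_le_mul (by simpa using Nat.norm_cast_le (α := R) (n + 1)) hz
      (norm_nonneg _) (by positivity))
  rw [binomialMoment_succ_succ]
  calc ‖((n : R) + 1) * z * ∑ s ∈ range (q + 1), (q.choose s : R) * binomialMoment z s n‖
      ≤ (n + 1) * 1 * ∑ s ∈ range (q + 1), (q.choose s : ℝ) * B :=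
        (norm_mul_le _ _).trans (mul_le_mul hfactor ((norm_sum_le _ _).trans (sum_le_sum hterm))
          (norm_nonneg _) (by positivity))
    _ = (n + 1) * 2 ^ q * B := by
        rw [← sum_mul, ← Nat.cast_sum, Nat.sum_range_choose]; push_cast; ring

-- `max 1` rather than `‖1 + z‖`: for `z = -1`, `binomialMoment z 1 1 = -1` although `1 + z = 0`.
lemma exists_norm_binomialMoment_le {z : R} (hz : ‖z‖ ≤ 1) (q : ℕ) :
    ∃ C, 0 ≤ C ∧ ∀ s ≤ q, ∀ n : ℕ,
      ‖binomialMoment z s n‖ ≤ C * ((n : ℝ) + 1) ^ q * max 1 ‖1 + z‖ ^ n := by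
  set r := max 1 ‖1 + z‖
  have hr : 1 ≤ r := le_max_left _ _
  induction q with
  | zero =>
    refine ⟨1, zero_le_one, fun s hs n => ?_⟩
    obtain rfl := Nat.le_zero.mp hs
    rw [binomialMoment_zero, pow_zero, one_mul, one_mul]
    exact (norm_pow_le _ n).trans (pow_le_pow_left₀ (norm_nonneg _) (le_max_right _ _) n)
  | succ q ih =>
    obtain ⟨C, hC0, hC⟩ := ih
    refine ⟨2 ^ q * C, by positivity, fun s hs n => ?_⟩
    rcases hs.lt_or_eq with hs | rfl
    · calc ‖binomialMoment z s n‖ ≤ 1 * C * ((n : ℝ) + 1) ^ q * r ^ n := by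
            rw [one_mul]; exact hC s (Nat.lt_succ_iff.mp hs) n
        _ ≤ 2 ^ q * C * ((n : ℝ) + 1) ^ (q + 1) * r ^ n := by
            gcongr
            · exact one_le_pow₀ one_le_two
            · linarith [n.cast_nonneg (α := ℝ)]
            · omega
    cases n with
    | zero => rw [binomialMoment_succ_zero, norm_zero]; positivity
    | succ n =>
      calc ‖binomialMoment z (q + 1) (n + 1)‖ ≤ (n + 1) * 2 ^ q * (C * ((n : ℝ) + 1) ^ q * r ^ n) :=
            norm_binomialMoment_succ_succ_le hz fun s hs => hC s hs n
        _ = 2 ^ q * C * ((n : ℝ) + 1) ^ (q + 1) * r ^ n := by ring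
        _ ≤ 2 ^ q * C * (((n + 1 : ℕ) : ℝ) + 1) ^ (q + 1) * r ^ (n + 1) := by
            gcongr
            · linarith
            · omega

lemma exists_norm_sum_choose_mul_pow_mul_linear_pow_le {z : R} (hz : ‖z‖ ≤ 1) (N : ℕ) :
    ∃ C, 0 ≤ C ∧ ∀ (a b : R) (n : ℕ),
      ‖∑ i ∈ range (n + 1), (n.choose i : R) * z ^ i * (a * i + b) ^ N‖ ≤
        C * (‖a‖ + ‖b‖) ^ N * ((n : ℝ) + 1) ^ N * max 1 ‖1 + z‖ ^ n := by
  obtain ⟨C, hC0, hC⟩ := exists_norm_binomialMoment_le hz N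
  refine ⟨C, hC0, fun a b n => ?_⟩
  rw [sum_choose_mul_pow_mul_linear_pow, add_pow, mul_sum, sum_mul, sum_mul]
  refine (norm_sum_le _ _).trans (sum_le_sum fun p hp => ?_)
  have hpN := Nat.lt_succ_iff.mp (mem_range.mp hp)
  calc ‖(N.choose p : R) * a ^ p * b ^ (N - p) * binomialMoment z p n‖
      ≤ N.choose p * ‖a‖ ^ p * ‖b‖ ^ (N - p) * ‖binomialMoment z p n‖ := by
        refine (norm_mul_le _ _).trans (mul_le_mul_of_nonneg_right ?_ (norm_nonneg _))
        refine (norm_mul_le _ _).trans (mul_le_mul ((norm_mul_le _ _).trans ?_)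
          (norm_pow_le _ _) (norm_nonneg _) (by positivity))
        exact mul_le_mul (by simpa using Nat.norm_cast_le (α := R) _) (norm_pow_le _ _)
          (norm_nonneg _) (Nat.cast_nonneg _)
    _ ≤ N.choose p * ‖a‖ ^ p * ‖b‖ ^ (N - p) * (C * ((n : ℝ) + 1) ^ N * max 1 ‖1 + z‖ ^ n) := by
        gcongr; exact hC p hpN n
    _ = _ := by ring

end BinomialMomentBounds

lemma tendsto_add_one_pow_mul_pow_atTop_nhds_zero (k : ℕ) {ρ : ℝ} (h0 : 0 ≤ ρ) (h1 : ρ < 1) :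
    Tendsto (fun n : ℕ => ((n : ℝ) + 1) ^ k * ρ ^ n) atTop (𝓝 0) := by
  simp_rw [add_pow, one_pow, mul_one, sum_mul]
  simpa [mul_right_comm _ (k.choose _ : ℝ)] using tendsto_finsetSum (range (k + 1)) fun j _ =>
    (tendsto_pow_const_mul_const_pow_of_lt_one j h0 h1).mul_const (k.choose j : ℝ)

def binomialMean (h y : ℝ) (n : ℕ) : (ℝ → ℂ) →ₗ[ℂ] ℂ where
  toFun g := (∑ k ∈ range (n + 1), (n.choose k : ℂ) * g (y + ((n : ℝ) / 2 - (k : ℝ)) * h)) / 2 ^ n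
  map_add' g₁ g₂ := by simp only [Pi.add_apply, mul_add, sum_add_distrib, add_div]
  map_smul' c g := by
    simp only [Pi.smul_apply, smul_eq_mul, RingHom.id_apply, ← mul_div_assoc, mul_sum,
      mul_left_comm c]

lemma binomialMean_apply (h y : ℝ) (n : ℕ) (g : ℝ → ℂ) :
    binomialMean h y n g =
      (∑ k ∈ range (n + 1), (n.choose k : ℂ) * g (y + ((n : ℝ) / 2 - (k : ℝ)) * h)) / 2 ^ n :=
  rfl

lemma binomialMean_exp_mul (h y : ℝ) (n : ℕ) (ζ : ℂ) :
    binomialMean h y n (fun w => exp (w * ζ)) = exp (y * ζ) * cosh (h * ζ / 2) ^ n := by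
  have hterm (k : ℕ) : exp (↑(y + ((n : ℝ) / 2 - (k : ℝ)) * h) * ζ) =
      exp (y * ζ) * exp (h * ζ / 2) ^ n * exp (-(h * ζ)) ^ k := by
    rw [← exp_nat_mul, ← exp_nat_mul, ← exp_add, ← exp_add]
    push_cast; ring_nf
  have hcosh : exp (h * ζ / 2) * (exp (-(h * ζ)) + 1) = 2 * cosh (h * ζ / 2) := by
    rw [two_cosh, mul_add, mul_one, ← exp_add]; ring_nf
  have hsum : ∑ k ∈ range (n + 1), (n.choose k : ℂ) *
      (exp (y * ζ) * exp (h * ζ / 2) ^ n * exp (-(h * ζ)) ^ k) =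
      exp (y * ζ) * (exp (h * ζ / 2) * (exp (-(h * ζ)) + 1)) ^ n := by
    rw [mul_pow, add_pow, mul_sum, mul_sum]
    exact sum_congr rfl fun k _ => by ring
  rw [binomialMean_apply]
  simp_rw [hterm]
  rw [hsum, hcosh, mul_pow]
  field_simp

lemma binomialMean_integral (h y : ℝ) (n : ℕ) {G : ℝ → ℝ → ℂ} (hG : ∀ w, Integrable (G w)) :
    binomialMean h y n (fun w => ∫ x, G w x) = ∫ x, binomialMean h y n (fun w => G w x) := by
  simp only [binomialMean_apply]
  rw [integral_div, integral_finsetSum _ fun k _ => (hG _).const_mul _]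
  simp_rw [integral_const_mul]

lemma ae_abs_cos_mul_lt_one {a : ℝ} (ha : a ≠ 0) : ∀ᵐ x : ℝ, |Real.cos (a * x)| < 1 := by
  filter_upwards [(Set.countable_range fun k : ℤ => k * π / a).ae_notMem volume] with x hx
  refine (Real.abs_cos_le_one _).lt_of_ne fun h1 => hx ?_
  obtain ⟨k, hk⟩ := Real.abs_cos_eq_one_iff.mp h1
  exact ⟨k, by field_simp; linarith⟩

lemma tendsto_integral_mul_pow {α 𝕜 : Type*} [MeasurableSpace α] {μ : Measure α} [RCLike 𝕜]
    {φ g : α → 𝕜} (hφ : Integrable φ μ) (hg : AEStronglyMeasurable g μ)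
    (hg1 : ∀ᵐ x ∂μ, ‖g x‖ < 1) :
    Tendsto (fun n : ℕ => ∫ x, φ x * g x ^ n ∂μ) atTop (𝓝 0) := by
  have hdom (n : ℕ) : ∀ᵐ x ∂μ, ‖φ x * g x ^ n‖ ≤ ‖φ x‖ := by
    filter_upwards [hg1] with x hx
    rw [norm_mul, norm_pow]
    exact mul_le_of_le_one_right (norm_nonneg _) (pow_le_one₀ (norm_nonneg _) hx.le)
  have hlim : ∀ᵐ x ∂μ, Tendsto (fun n : ℕ => φ x * g x ^ n) atTop (𝓝 0) := by
    filter_upwards [hg1] with x hx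
    simpa using (tendsto_pow_atTop_nhds_zero_of_norm_lt_one hx).const_mul (φ x)
  simpa using tendsto_integral_of_dominated_convergence _
    (fun n => hφ.aestronglyMeasurable.mul (hg.pow n)) hφ.norm hdom hlim

lemma norm_exp_neg_two_pi_I_mul (a b : ℝ) : ‖exp (-2 * π * I * a * b)‖ = 1 := by
  rw [show -2 * π * I * a * b = ((-2 * π * a * b : ℝ) : ℂ) * I by push_cast; ring]
  exact norm_exp_ofReal_mul_I _

lemma tendsto_binomialMean_fourierIntegral {h : ℝ} (hh : h ≠ 0) {m : ℝ → ℂ} (hm : Integrable m)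
    (y : ℝ) :
    Tendsto (fun n => binomialMean h y n (fun w => ∫ x, m x * exp (-2 * π * I * w * x)))
      atTop (𝓝 0) := by
  have hkernel (w : ℝ) : Integrable fun x : ℝ => m x * exp (-2 * π * I * w * x) :=
    hm.mul_bdd (by fun_prop) (.of_forall fun x => (norm_exp_neg_two_pi_I_mul w x).le)
  have hmean (n : ℕ) (x : ℝ) : binomialMean h y n (fun w => m x * exp (-2 * π * I * w * x)) =
      m x * exp (-2 * π * I * y * x) * (Real.cos (π * h * x) : ℂ) ^ n := by
    have hfun : (fun w : ℝ => m x * exp (-2 * π * I * w * x)) =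
        m x • fun w : ℝ => exp (w * (-2 * π * I * x)) := by
      funext w; simp only [Pi.smul_apply, smul_eq_mul]; ring_nf
    rw [hfun, map_smul, binomialMean_exp_mul, smul_eq_mul,
      show (h : ℂ) * (-2 * π * I * x) / 2 = -(((π * h * x : ℝ) : ℂ) * I) by push_cast; ring,
      cosh_neg, cosh_mul_I, ofReal_cos]
    ring_nf
  simp_rw [binomialMean_integral h y _ hkernel, hmean]
  refine tendsto_integral_mul_pow (hkernel y) (by fun_prop) ?_
  filter_upwards [ae_abs_cos_mul_lt_one (mul_ne_zero Real.pi_ne_zero hh)] with x hx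
  rwa [norm_real, Real.norm_eq_abs]

lemma norm_two_pi_I_mul (t : ℝ) : ‖2 * π * I * t‖ = 2 * π * |t| := by
  simp [norm_real, abs_of_pos Real.pi_pos]

lemma norm_one_add_exp_lt_two {h c : ℝ} (hh : h ≠ 0) (hc : ¬ ∃ ν : ℤ, c = ν / h) :
    ‖1 + exp ((2 * π * c * h : ℝ) * I)‖ < 2 := by
  set z := exp ((2 * π * c * h : ℝ) * I)
  have hz1 : ‖z‖ = 1 := norm_exp_ofReal_mul_I _
  have hz : z ≠ 1 := fun h1 => by
    obtain ⟨ν, hν⟩ := Complex.exp_eq_one_iff.mp h1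
    have hch : ((c * h : ℝ) : ℂ) = (ν : ℝ) := by
      have : (2 * π * I : ℂ) ≠ 0 := by simp [Real.pi_ne_zero]
      push_cast at hν ⊢
      apply mul_left_cancel₀ this
      linear_combination hν
    exact hc ⟨ν, by rw [eq_div_iff hh]; exact_mod_cast hch⟩
  refine (norm_add_le 1 z).trans_eq (by rw [norm_one, hz1]; norm_num) |>.lt_of_ne fun h2 => ?_
  exact hz (eq_of_norm_eq_of_norm_add_eq (by rw [norm_one, hz1])
    (by rw [h2, norm_one, hz1]; norm_num)).symm

lemma binomialMean_exp_mul_pow (h y c : ℝ) (N n : ℕ) :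
    binomialMean h y n (fun w => exp (-2 * π * I * c * w) * (2 * π * I * w) ^ N) =
      exp (-2 * π * I * c * (y + n * h / 2 : ℝ)) *
        (∑ i ∈ range (n + 1), (n.choose i : ℂ) * exp ((2 * π * c * h : ℝ) * I) ^ i *
          (-(2 * π * I * h) * i + 2 * π * I * (y + n * h / 2 : ℝ)) ^ N) / 2 ^ n := by
  rw [binomialMean_apply, mul_sum]
  refine congrArg (· / _) (sum_congr rfl fun i _ => ?_)
  have hexp : exp (-2 * π * I * c * (y + ((n : ℝ) / 2 - i) * h : ℝ)) =
      exp (-2 * π * I * c * (y + n * h / 2 : ℝ)) * exp ((2 * π * c * h : ℝ) * I) ^ i := by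
    rw [← exp_nat_mul, ← exp_add]; push_cast; ring_nf
  rw [hexp, show 2 * π * I * ((y + ((n : ℝ) / 2 - i) * h : ℝ) : ℂ) =
    -(2 * π * I * h) * i + 2 * π * I * (y + n * h / 2 : ℝ) by push_cast; ring]
  ring

lemma norm_two_pi_I_mul_add_le (h y : ℝ) (n : ℕ) :
    ‖-(2 * π * I * h)‖ + ‖2 * π * I * (y + n * h / 2 : ℝ)‖ ≤ 2 * π * (|h| + |y|) * (n + 1) := by
  rw [norm_neg, norm_two_pi_I_mul, norm_two_pi_I_mul]
  have hshift : |y + n * h / 2| ≤ |y| + n * |h| := by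
    refine (abs_add_le _ _).trans ?_
    rw [abs_div, abs_mul, Nat.abs_cast, abs_two]
    linarith [mul_nonneg n.cast_nonneg (abs_nonneg h)]
  nlinarith [Real.pi_pos, mul_nonneg n.cast_nonneg (abs_nonneg y)]

lemma tendsto_binomialMean_exp_mul_pow {h c : ℝ} (hh : h ≠ 0) (hc : ¬ ∃ ν : ℤ, c = ν / h)
    (y : ℝ) (N : ℕ) :
    Tendsto (fun n => binomialMean h y n
      (fun w => exp (-2 * π * I * c * w) * (2 * π * I * w) ^ N)) atTop (𝓝 0) := by
  set z := exp ((2 * π * c * h : ℝ) * I)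
  set r := max 1 ‖1 + z‖
  set L := 2 * π * (|h| + |y|)
  have hr : r / 2 < 1 :=
    (div_lt_one two_pos).mpr (max_lt one_lt_two (norm_one_add_exp_lt_two hh hc))
  obtain ⟨C, hC0, hC⟩ :=
    exists_norm_sum_choose_mul_pow_mul_linear_pow_le (norm_exp_ofReal_mul_I _).le N (z := z)
  have hbound (n : ℕ) : ‖binomialMean h y n
      (fun w => exp (-2 * π * I * c * w) * (2 * π * I * w) ^ N)‖ ≤
        C * L ^ N * (((n : ℝ) + 1) ^ (2 * N) * (r / 2) ^ n) := by
    rw [binomialMean_exp_mul_pow, norm_div, norm_mul, norm_exp_neg_two_pi_I_mul, one_mul, norm_pow,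
      Complex.norm_two, div_le_iff₀ (by positivity)]
    refine (hC _ _ n).trans ?_
    calc C * (‖-(2 * π * I * h)‖ + ‖2 * π * I * (y + n * h / 2 : ℝ)‖) ^ N * ((n : ℝ) + 1) ^ N
          * r ^ n
        ≤ C * (L * (n + 1)) ^ N * ((n : ℝ) + 1) ^ N * r ^ n := by
          gcongr; exact norm_two_pi_I_mul_add_le h y n
      _ = _ := by rw [div_pow, mul_pow, two_mul, pow_add]; field_simp
  exact squeeze_zero_norm hbound (by simpa using
    (tendsto_add_one_pow_mul_pow_atTop_nhds_zero (2 * N) (by positivity) hr).const_mul (C * L ^ N))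

theorem central_binomial_sum_little_o_two_pow_general
    (h : ℝ) (hh : 0 < h)
    (m : ℝ → ℂ) (hmi : Integrable m)
    (j : ℕ) (a : ℕ → ℂ) (N : ℕ → ℕ) (c : ℕ → ℝ)
    (hc : ∀ k ≤ j, ¬ ∃ ν : ℤ, c k = (ν : ℝ) / h)
    (f : ℝ → ℂ)
    (hf : ∀ w : ℝ,
      f w = (∫ x : ℝ, m x * Complex.exp (-2 * (Real.pi : ℂ) * Complex.I * (w : ℂ) * (x : ℂ)))
        + ∑ k ∈ Finset.range (j + 1),
            a k * Complex.exp (-2 * (Real.pi : ℂ) * Complex.I * (c k : ℂ) * (w : ℂ))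
              * (2 * (Real.pi : ℂ) * Complex.I * (w : ℂ)) ^ (N k))
    (y : ℝ) :
    Tendsto (fun n : ℕ =>
        (∑ k ∈ Finset.range (n + 1),
          (n.choose k : ℂ) * f (y + ((n : ℝ) / 2 - (k : ℝ)) * h)) / 2 ^ n)
      atTop (nhds 0) := by
  have hf' : f = (fun w : ℝ => ∫ x, m x * exp (-2 * π * I * w * x)) +
      ∑ k ∈ range (j + 1),
        a k • fun w : ℝ => exp (-2 * π * I * c k * w) * (2 * π * I * w) ^ N k := by
    funext w
    simp only [hf, Pi.add_apply, Finset.sum_apply, Pi.smul_apply, smul_eq_mul, mul_assoc]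
  change Tendsto (fun n => binomialMean h y n f) atTop (𝓝 0)
  simp only [hf', map_add, map_sum, map_smul, smul_eq_mul]
  simpa using (tendsto_binomialMean_fourierIntegral hh.ne' hmi y).add <|
    tendsto_finsetSum _ fun k hk => (tendsto_binomialMean_exp_mul_pow hh.ne'
      (hc k (Nat.lt_succ_iff.mp (mem_range.mp hk))) y (N k)).const_mul (a k)

theorem central_binomial_sum_little_o_two_pow
    (h : ℝ) (hh : 0 < h)
    (m : ℝ → ℂ) (hm : Measurable m) (hmi : Integrable m)
    (j : ℕ) (a : ℕ → ℂ) (N : ℕ → ℕ) (c : ℕ → ℝ)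
    (hc : ∀ k ≤ j, ¬ ∃ ν : ℤ, c k = (ν : ℝ) / h)
    (f : ℝ → ℂ)
    (hf : ∀ w : ℝ,
      f w = (∫ x : ℝ, m x * Complex.exp (-2 * (Real.pi : ℂ) * Complex.I * (w : ℂ) * (x : ℂ)))
        + ∑ k ∈ Finset.range (j + 1),
            a k * Complex.exp (-2 * (Real.pi : ℂ) * Complex.I * (c k : ℂ) * (w : ℂ))
              * (2 * (Real.pi : ℂ) * Complex.I * (w : ℂ)) ^ (N k))
    (y : ℝ) :
    Tendsto (fun n : ℕ =>
        (∑ k ∈ Finset.range (n + 1),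
          (n.choose k : ℂ) * f (y + ((n : ℝ) / 2 - (k : ℝ)) * h)) / 2 ^ n)
      atTop (nhds 0) :=
  central_binomial_sum_little_o_two_pow_general h hh m hmi j a N c hc f hf y
end
end
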